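/- Theorem (irrelevance of channel ordering in inference): Let A, B, X, Y be finite sets, c : A ⇝ X and d : B ⇝ Y channels, ω a joint state on A × B, and q a predicate on Y. Assume the validity ((c ⊗ id) ≫ ω) ⊨ ((id ⊗ d) ≪ (1 ⊗ q)) is nonzero (equivalently, ((id ⊗ d) ≫ ω) ⊨ (1 ⊗ q) is nonzero). Then the two states on X obtained by (i) transforming ω along c ⊗ id, updating with the transformed predicate (id ⊗ d) ≪ (1 ⊗ q), and taking the first marginal, and (ii) transforming ω along id ⊗ d, updating with 1 ⊗ q, transforming along c ⊗ id, and taking the first marginal, coincide: π₁ ≫ ( ((c ⊗ id) ≫ ω) |_{(id ⊗ d) ≪ (1 ⊗ q)} ) = π₁ ≫ ( (c ⊗ id) ≫ ( ((id ⊗ d) ≫ ω) |_{1 ⊗ q} ) ). -/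
import Mathlib


open Finset

/-- A state on a finite set `X`: values in `[0,1]` summing to `1`. -/
def IsState {X : Type*} [Fintype X] (ω : X → ℝ) : Prop :=
  (∀ x, 0 ≤ ω x ∧ ω x ≤ 1) ∧ ∑ x, ω x = 1

/-- A channel `c : X ⇝ Y`: each `c x` is a state on `Y`. -/
def IsChannel {X Y : Type*} [Fintype Y] (c : X → Y → ℝ) : Prop :=
  ∀ x, IsState (c x)

/-- A predicate on `X`: values in `[0,1]`. -/
def IsPred {X : Type*} (p : X → ℝ) : Prop :=
  ∀ x, 0 ≤ p x ∧ p x ≤ 1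

/-- State transformation `c ≫ ω` along a channel. -/
def stTrans {X Y : Type*} [Fintype X] (c : X → Y → ℝ) (ω : X → ℝ) : Y → ℝ :=
  fun y => ∑ x, ω x * c x y

/-- Sequential composition `d ∗ c` of channels. -/
def comp {X Y Z : Type*} [Fintype Y] (d : Y → Z → ℝ) (c : X → Y → ℝ) : X → Z → ℝ :=
  fun x => stTrans d (c x)

/-- The identity channel `id(x) = 1|x⟩`. -/
def idChan {X : Type*} [DecidableEq X] : X → X → ℝ :=
  fun x x' => if x' = x then 1 else 0

/-- Product of states `ω ⊗ ρ`. -/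
def prodState {X Y : Type*} (ω : X → ℝ) (ρ : Y → ℝ) : X × Y → ℝ :=
  fun z => ω z.1 * ρ z.2

/-- Parallel composition `c ⊗ d` of channels. -/
def parChan {X Y A B : Type*} (c : X → Y → ℝ) (d : A → B → ℝ) : X × A → Y × B → ℝ :=
  fun z => prodState (c z.1) (d z.2)

/-- Predicate transformation `c ≪ q` along a channel. -/
def predTrans {X Y : Type*} [Fintype Y] (c : X → Y → ℝ) (q : Y → ℝ) : X → ℝ :=
  fun x => ∑ y, c x y * q y

/-- Validity `ω ⊨ p`. -/
def validity {X : Type*} [Fintype X] (ω : X → ℝ) (p : X → ℝ) : ℝ :=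
  ∑ x, ω x * p x

/-- The updated state `ω|_p`. -/
noncomputable def update {X : Type*} [Fintype X] (ω : X → ℝ) (p : X → ℝ) : X → ℝ :=
  fun x => ω x * p x / validity ω p

/-- Truth predicate. -/
def truthPred (X : Type*) : X → ℝ := fun _ => 1

/-- Product of predicates `p ⊗ q`. -/
def prodPred {X Y : Type*} (p : X → ℝ) (q : Y → ℝ) : X × Y → ℝ :=
  fun z => p z.1 * q z.2

/-- First marginal `π₁ ≫ σ`. -/
def marg1 {X Y : Type*} [Fintype Y] (σ : X × Y → ℝ) : X → ℝ :=
  fun x => ∑ y, σ (x, y)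

theorem channel_ordering_irrelevance
    {A B X Y : Type*} [Fintype A] [Fintype B] [Fintype X] [Fintype Y]
    [DecidableEq A] [DecidableEq B] [DecidableEq X] [DecidableEq Y]
    (c : A → X → ℝ) (d : B → Y → ℝ) (ω : A × B → ℝ) (q : Y → ℝ)
    (hc : IsChannel c) (hd : IsChannel d) (hω : IsState ω) (hq : IsPred q)
    (hv : validity (stTrans (parChan c (idChan (X := B))) ω)
            (predTrans (parChan (idChan (X := X)) d) (prodPred (truthPred X) q)) ≠ 0) :
    marg1 (update (stTrans (parChan c (idChan (X := B))) ω)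
            (predTrans (parChan (idChan (X := X)) d) (prodPred (truthPred X) q)))
      = marg1 (stTrans (parChan c (idChan (X := Y)))
               (update (stTrans (parChan (idChan (X := A)) d) ω)
                 (prodPred (truthPred A) q))) := by
  classical
  have h1 : ∀ (x : X) (b : B),
      predTrans (parChan (idChan (X := X)) d) (prodPred (truthPred X) q) (x, b)
        = ∑ y, d b y * q y := by
    intro x b
    simp only [predTrans, parChan, prodState, idChan, prodPred, truthPred,
      Fintype.sum_prod_type, ite_mul, one_mul, zero_mul]
    rw [Finset.sum_comm]
    simp
  have h2 : ∀ (x : X) (b : B),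
      stTrans (parChan c (idChan (X := B))) ω (x, b) = ∑ a, ω (a, b) * c a x := by
    intro x b
    simp [stTrans, parChan, prodState, idChan, Fintype.sum_prod_type, mul_ite]
  have h3 : ∀ (a : A) (y : Y),
      stTrans (parChan (idChan (X := A)) d) ω (a, y) = ∑ b, ω (a, b) * d b y := by
    intro a y
    simp [stTrans, parChan, prodState, idChan, Fintype.sum_prod_type, ite_mul,
      mul_ite]
  have h4 : ∀ (u : A × Y → ℝ) (x : X) (y : Y),
      stTrans (parChan c (idChan (X := Y))) u (x, y) = ∑ a, u (a, y) * c a x := by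
    intro u x y
    simp [stTrans, parChan, prodState, idChan, Fintype.sum_prod_type, mul_ite]
  have hV : validity (stTrans (parChan (idChan (X := A)) d) ω)
        (prodPred (truthPred A) q)
      = validity (stTrans (parChan c (idChan (X := B))) ω)
        (predTrans (parChan (idChan (X := X)) d) (prodPred (truthPred X) q)) := by
    simp only [validity, Fintype.sum_prod_type, h1, h2, h3, prodPred, truthPred, one_mul]
    have lhs : ∑ a, ∑ y, (∑ b, ω (a, b) * d b y) * q y
        = ∑ a, ∑ b, ω (a, b) * ∑ y, d b y * q y := by
      refine Finset.sum_congr rfl fun a _ => ?_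
      simp only [Finset.sum_mul, Finset.mul_sum]
      rw [Finset.sum_comm]
      exact Finset.sum_congr rfl fun b _ => Finset.sum_congr rfl fun y _ => by ring
    have rhs : ∑ x : X, ∑ b : B, (∑ a, ω (a, b) * c a x) * (∑ y, d b y * q y)
        = ∑ a, ∑ b, ω (a, b) * ∑ y, d b y * q y := by
      rw [Finset.sum_comm]
      rw [show (∑ b : B, ∑ x : X, (∑ a, ω (a, b) * c a x) * (∑ y, d b y * q y))
          = ∑ b : B, ∑ a, ω (a, b) * ∑ y, d b y * q y from
        Finset.sum_congr rfl fun b _ => by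
          simp only [Finset.sum_mul]
          rw [Finset.sum_comm]
          refine Finset.sum_congr rfl fun a _ => ?_
          rw [← Finset.sum_mul, ← Finset.mul_sum, (hc a).2, mul_one]]
      rw [Finset.sum_comm]
    rw [lhs, rhs]
  funext x
  simp only [marg1, update, h1, h2, h3, h4, prodPred, truthPred, one_mul, ← hV]
  rw [← Finset.sum_div]
  simp only [div_mul_eq_mul_div, ← Finset.sum_div]
  congr 1
  simp only [Finset.sum_mul, Finset.mul_sum]
  conv_lhs => rw [Finset.sum_comm]
  refine Finset.sum_congr rfl fun y _ => ?_
  rw [Finset.sum_comm]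
  exact Finset.sum_congr rfl fun a _ => Finset.sum_congr rfl fun b _ => by ring
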